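/- arXiv:2009.09552 — 3 statements merged into one kernel-verified Lean document; each statement's English description precedes it below -/
import Mathlib

section
/- Let X be a Banach space with dual X*, and let 0 < α, β < 1 with α + β > 1. If f ∈ C^α([0,T]; X) and g ∈ C^β([0,T]; X*), then the Young integral t ↦ ∫₀ᵗ ⟨g_r, df_r⟩ is well-defined and there is a constant C (depending only on α, β, T) such that the map t ↦ ∫₀ᵗ ⟨g_r, df_r⟩ belongs to C^α([0,T]; ℝ) with ‖∫₀^· ⟨g_r, df_r⟩‖_{C^α} ≤ C ‖g‖_{C^β([0,T];X*)} ‖f‖_{C^α([0,T];X)}. -/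
/-!
The integral is produced by the sewing lemma applied to the germ `Ξ s t = g s (f t - f s)`,
whose defect `δΞ s u t = Ξ s t - Ξ s u - Ξ u t = (g s - g u) (f t - f u)` is
`O(|t - s| ^ θ)` with `θ = α + β > 1`. On a uniform grid, the Riemann sum over `m` consecutive
cells differs from the germ of its endpoints by at most `C_θ K (m h) ^ θ`: split the cells into
two blocks of at most two thirds of them, apply induction, and pay one defect. Consequently the
Riemann sums over the dyadic grids converge, and their limit `I` satisfies
`|I t - I s - Ξ s t| ≲ |t - s| ^ θ`; since `|Ξ s t| ≲ |t - s| ^ α`, `I` is `α`-Hölder.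
-/

open Set Finset Filter Topology

/-- Splitting a block of `m` cells into two blocks of at most `2m/3` cells gains the factor
`(2/3)^(θ-1)` (`Real.rpow_add_rpow_le_of_le_mul`), so the constant of the discrete sewing bound
is the fixed point of `c ↦ c (2/3)^(θ-1) + 1`. -/
noncomputable def sewingConst (θ : ℝ) : ℝ := (1 - (2 / 3 : ℝ) ^ (θ - 1))⁻¹

lemma two_thirds_rpow_lt_one {θ : ℝ} (hθ : 1 < θ) : (2 / 3 : ℝ) ^ (θ - 1) < 1 :=
  Real.rpow_lt_one (by norm_num) (by norm_num) (by linarith)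

lemma sewingConst_pos {θ : ℝ} (hθ : 1 < θ) : 0 < sewingConst θ :=
  inv_pos.2 (sub_pos.2 (two_thirds_rpow_lt_one hθ))

lemma sewingConst_mul_add_one {θ : ℝ} (hθ : 1 < θ) :
    sewingConst θ * (2 / 3 : ℝ) ^ (θ - 1) + 1 = sewingConst θ := by
  have := (sub_pos.2 (two_thirds_rpow_lt_one hθ)).ne'
  unfold sewingConst
  field_simp
  ring

lemma Real.rpow_add_rpow_le_of_le_mul {a b r θ : ℝ} (ha : 0 ≤ a) (hb : 0 ≤ b) (hr : 0 ≤ r)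
    (hθ : 1 ≤ θ) (har : a ≤ r * (a + b)) (hbr : b ≤ r * (a + b)) :
    a ^ θ + b ^ θ ≤ r ^ (θ - 1) * (a + b) ^ θ := by
  have hθ' : 0 ≤ θ - 1 := by linarith
  have split : ∀ x : ℝ, 0 ≤ x → x ^ θ = x * x ^ (θ - 1) := fun x hx => by
    rw [← Real.rpow_one_add' hx (by linarith), add_sub_cancel]
  calc a ^ θ + b ^ θ ≤ a * (r * (a + b)) ^ (θ - 1) + b * (r * (a + b)) ^ (θ - 1) := by
        rw [split a ha, split b hb]; gcongr
    _ = r ^ (θ - 1) * (a + b) ^ θ := by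
        rw [Real.mul_rpow hr (by positivity), split (a + b) (by positivity)]; ring

lemma Nat.floor_div_mul_le {t h : ℝ} (ht : 0 ≤ t) (hh : 0 < h) : (⌊t / h⌋₊ : ℝ) * h ≤ t :=
  (le_div_iff₀ hh).1 (Nat.floor_le (div_nonneg ht hh.le))

lemma Nat.lt_floor_div_mul_add (t : ℝ) {h : ℝ} (hh : 0 < h) : t < ⌊t / h⌋₊ * h + h := by
  have := Nat.lt_floor_add_one (t / h)
  rwa [div_lt_iff₀ hh, add_mul, one_mul] at this

lemma Nat.two_mul_floor_le_floor_two_mul {x : ℝ} (hx : 0 ≤ x) : 2 * ⌊x⌋₊ ≤ ⌊2 * x⌋₊ :=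
  Nat.le_floor (by push_cast; linarith [Nat.floor_le hx])

lemma Nat.floor_two_mul_le {x : ℝ} (hx : 0 ≤ x) : ⌊2 * x⌋₊ ≤ 2 * ⌊x⌋₊ + 1 :=
  Nat.lt_succ_iff.1 <| (Nat.floor_lt (by positivity)).2 <| by
    push_cast; linarith [Nat.lt_floor_add_one x]

lemma Real.div_two_pow_rpow {T : ℝ} (hT : 0 ≤ T) (θ : ℝ) (n : ℕ) :
    (T / 2 ^ n) ^ θ = T ^ θ * ((2 ^ θ)⁻¹) ^ n := by
  rw [Real.div_rpow hT (by positivity), ← Real.rpow_pow_comm (by norm_num), div_eq_mul_inv,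
    inv_pow]

lemma summable_div_two_pow_rpow {T γ : ℝ} (hT : 0 ≤ T) (hγ : 0 < γ) :
    Summable fun n : ℕ => (T / 2 ^ n) ^ γ := by
  simp_rw [Real.div_two_pow_rpow hT]
  refine (summable_geometric_of_lt_one (by positivity) ?_).mul_left _
  exact inv_lt_one_of_one_lt₀ (Real.one_lt_rpow (by norm_num) hγ)

lemma summable_two_pow_mul_div_two_pow_rpow {T θ : ℝ} (hT : 0 ≤ T) (hθ : 1 < θ) :
    Summable fun n : ℕ => 2 ^ n * (T / 2 ^ n) ^ θ := by
  have h2θ : (2 : ℝ) < 2 ^ θ := by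
    simpa using Real.rpow_lt_rpow_of_exponent_lt (by norm_num : (1 : ℝ) < 2) hθ
  simp_rw [Real.div_two_pow_rpow hT, mul_left_comm, ← mul_pow]
  refine (summable_geometric_of_lt_one (by positivity) ?_).mul_left _
  rwa [← div_eq_mul_inv, div_lt_one (by positivity)]

namespace Sewing

def delta {ι E : Type*} [Sub E] (Ξ : ι → ι → E) (s u t : ι) : E := Ξ s t - Ξ s u - Ξ u t

section Bounds

variable {E : Type*} [SeminormedAddCommGroup E]

def GermBound (T L γ : ℝ) (Ξ : ℝ → ℝ → E) : Prop :=
  ∀ s t, 0 ≤ s → s ≤ t → t ≤ T → ‖Ξ s t‖ ≤ L * (t - s) ^ γ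

def DeltaBound (T K θ : ℝ) (Ξ : ℝ → ℝ → E) : Prop :=
  ∀ s u t, 0 ≤ s → s ≤ u → u ≤ t → t ≤ T → ‖delta Ξ s u t‖ ≤ K * (t - s) ^ θ

end Bounds

theorem norm_sum_Ico_sub_le {E : Type*} [SeminormedAddCommGroup E] {θ M : ℝ} (hθ : 1 < θ)
    (hM : 0 ≤ M) {F : ℕ → ℕ → E} {N : ℕ}
    (hF : ∀ i j l, i ≤ j → j ≤ l → l ≤ N → ‖delta F i j l‖ ≤ M * ((l : ℝ) - i) ^ θ)
    (m k : ℕ) (hkm : k + m ≤ N) :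
    ‖∑ j ∈ Ico k (k + m), F j (j + 1) - F k (k + m)‖ ≤ sewingConst θ * M * (m : ℝ) ^ θ := by
  induction m using Nat.strong_induction_on generalizing k with
  | _ m ih =>
  have hθ0 : θ ≠ 0 := by positivity
  have hc := sewingConst_pos hθ
  obtain hm | hm := lt_or_ge m 2
  · interval_cases m
    · simpa [delta, Real.zero_rpow hθ0] using hF k k k le_rfl le_rfl (by omega)
    · simpa using mul_nonneg hc.le hM
  obtain ⟨a, b, rfl, ha, hb, h3a, h3b⟩ : ∃ a b, m = a + b ∧ 0 < a ∧ 0 < b ∧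
      3 * a ≤ 2 * (a + b) ∧ 3 * b ≤ 2 * (a + b) := ⟨m / 2, m - m / 2, by omega, by omega,
    by omega, by omega, by omega⟩
  have hsplit : ∑ j ∈ Ico k (k + (a + b)), F j (j + 1) - F k (k + (a + b)) =
      (∑ j ∈ Ico k (k + a), F j (j + 1) - F k (k + a)) +
      (∑ j ∈ Ico (k + a) (k + a + b), F j (j + 1) - F (k + a) (k + a + b)) -
      delta F k (k + a) (k + a + b) := by
    rw [← sum_Ico_consecutive _ (by omega : k ≤ k + a) (by omega : k + a ≤ k + (a + b)),
      ← add_assoc]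
    simp only [delta]
    abel
  have hpow : (a : ℝ) ^ θ + (b : ℝ) ^ θ ≤ (2 / 3 : ℝ) ^ (θ - 1) * ((a + b : ℕ) : ℝ) ^ θ := by
    push_cast
    apply Real.rpow_add_rpow_le_of_le_mul (by positivity) (by positivity) (by norm_num) hθ.le
    · have : (3 * a : ℝ) ≤ 2 * (a + b) := by exact_mod_cast h3a
      linarith
    · have : (3 * b : ℝ) ≤ 2 * (a + b) := by exact_mod_cast h3b
      linarith
  rw [hsplit]
  calc _ ≤ sewingConst θ * M * (a : ℝ) ^ θ + sewingConst θ * M * (b : ℝ) ^ θ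
        + M * ((a + b : ℕ) : ℝ) ^ θ := by
        refine (norm_sub_le _ _).trans (add_le_add ((norm_add_le _ _).trans
          (add_le_add (ih a (by omega) k (by omega)) (ih b (by omega) (k + a) (by omega)))) ?_)
        have hδ := hF k (k + a) (k + a + b) (by omega) (by omega) (by omega)
        rwa [show ((k + a + b : ℕ) : ℝ) - k = ((a + b : ℕ) : ℝ) by push_cast; ring] at hδ
    _ ≤ sewingConst θ * M * ((2 / 3 : ℝ) ^ (θ - 1) * ((a + b : ℕ) : ℝ) ^ θ)
        + M * ((a + b : ℕ) : ℝ) ^ θ := by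
        rw [← mul_add]; gcongr
    _ = sewingConst θ * M * ((a + b : ℕ) : ℝ) ^ θ := by
        linear_combination M * ((a + b : ℕ) : ℝ) ^ θ * sewingConst_mul_add_one hθ

section Grid

variable {E : Type*} [NormedAddCommGroup E] {Ξ : ℝ → ℝ → E} {T θ γ K L h : ℝ}

def gridSum (Ξ : ℝ → ℝ → E) (h : ℝ) (k : ℕ) : E :=
  ∑ j ∈ range k, Ξ (j * h) (((j + 1 : ℕ) : ℝ) * h)

theorem norm_gridSum_add_sub_le (hθ : 1 < θ) (hK : 0 ≤ K) (hh : 0 ≤ h)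
    (hδ : DeltaBound T K θ Ξ) {k m : ℕ} (hkm : ((k + m : ℕ) : ℝ) * h ≤ T) :
    ‖gridSum Ξ h (k + m) - gridSum Ξ h k - Ξ (k * h) (((k + m : ℕ) : ℝ) * h)‖ ≤
      sewingConst θ * K * (m * h) ^ θ := by
  have hF : ∀ i j l : ℕ, i ≤ j → j ≤ l → l ≤ k + m →
      ‖delta (fun i l : ℕ => Ξ (i * h) (l * h)) i j l‖ ≤ K * h ^ θ * ((l : ℝ) - i) ^ θ := by
    intro i j l hij hjl hl
    have hl' : (l : ℝ) * h ≤ T := hkm.trans' (by gcongr)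
    have hil : (i : ℝ) ≤ l := by exact_mod_cast hij.trans hjl
    calc _ ≤ K * (l * h - i * h) ^ θ := hδ _ _ _ (by positivity) (by gcongr) (by gcongr) hl'
      _ = K * h ^ θ * ((l : ℝ) - i) ^ θ := by
        rw [← sub_mul, Real.mul_rpow (by linarith) hh]; ring
  rw [gridSum, gridSum, ← sum_Ico_eq_sub _ (Nat.le_add_right k m)]
  calc _ ≤ _ := norm_sum_Ico_sub_le hθ (by positivity) hF m k le_rfl
    _ = _ := by rw [Real.mul_rpow (Nat.cast_nonneg m) hh]; ring

theorem norm_gridSum_half_sub_le (hθ : 1 < θ) (hK : 0 ≤ K) (hL : 0 ≤ L) (hh : 0 ≤ h)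
    (hΞ : GermBound T L γ Ξ) (hδ : DeltaBound T K θ Ξ)
    {k k' : ℕ} (hk : 2 * k ≤ k') (hk' : k' ≤ 2 * k + 1) (hk'T : (k' : ℝ) * (h / 2) ≤ T) :
    ‖gridSum Ξ (h / 2) k' - gridSum Ξ h k‖ ≤ L * (h / 2) ^ γ + k * (sewingConst θ * K * h ^ θ) := by
  have hpairs : gridSum Ξ (h / 2) (2 * k) - gridSum Ξ h k = ∑ i ∈ range k,
      (gridSum Ξ (h / 2) (2 * i + 2) - gridSum Ξ (h / 2) (2 * i) -
        Ξ (i * h) (((i + 1 : ℕ) : ℝ) * h)) := by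
    have htel := sum_range_sub (fun i => gridSum Ξ (h / 2) (2 * i)) k
    simp only [mul_add, mul_one] at htel
    rw [sum_sub_distrib, htel]
    simp [gridSum]
  have hpair : ∀ i ∈ range k, ‖gridSum Ξ (h / 2) (2 * i + 2) - gridSum Ξ (h / 2) (2 * i)
      - Ξ (i * h) (((i + 1 : ℕ) : ℝ) * h)‖ ≤ sewingConst θ * K * h ^ θ := by
    intro i hi
    have hi2 : ((2 * i + 2 : ℕ) : ℝ) * (h / 2) ≤ T := hk'T.trans' (by
      gcongr; have := mem_range.1 hi; omega)
    have := norm_gridSum_add_sub_le hθ hK (by positivity) hδ hi2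
    convert this using 4 <;> push_cast <;> ring
  have htail : ‖gridSum Ξ (h / 2) k' - gridSum Ξ (h / 2) (2 * k)‖ ≤ L * (h / 2) ^ γ := by
    obtain rfl | rfl : k' = 2 * k ∨ k' = 2 * k + 1 := by omega
    · simp only [sub_self, norm_zero]; positivity
    · rw [gridSum, gridSum, sum_range_succ, add_sub_cancel_left]
      have := hΞ ((2 * k : ℕ) * (h / 2)) ((2 * k + 1 : ℕ) * (h / 2)) (by positivity)
        (by gcongr) hk'T
      convert this using 3; push_cast; ring
  calc _ = ‖(gridSum Ξ (h / 2) k' - gridSum Ξ (h / 2) (2 * k)) +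
        (gridSum Ξ (h / 2) (2 * k) - gridSum Ξ h k)‖ := by rw [sub_add_sub_cancel]
    _ ≤ _ := by
      refine (norm_add_le _ _).trans (add_le_add htail ?_)
      rw [hpairs]
      refine (norm_sum_le _ _).trans ((sum_le_sum hpair).trans_eq ?_)
      simp

theorem norm_sub_le_of_near (hL : 0 ≤ L) (hγ : 0 ≤ γ)
    (hΞ : GermBound T L γ Ξ) (hδ : DeltaBound T K θ Ξ)
    {a b s t : ℝ} (ha : 0 ≤ a) (has : a ≤ s) (hab : a ≤ b) (hst : s ≤ t) (hbt : b ≤ t)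
    (htT : t ≤ T) (hsa : s - a ≤ h) (htb : t - b ≤ h) :
    ‖Ξ a b - Ξ s t‖ ≤ 2 * L * h ^ γ + 2 * K * (t - a) ^ θ := by
  have hΞas : ‖Ξ a s‖ ≤ L * h ^ γ := (hΞ a s ha has (hst.trans htT)).trans (by gcongr)
  have hΞbt : ‖Ξ b t‖ ≤ L * h ^ γ := (hΞ b t (ha.trans hab) hbt htT).trans (by gcongr)
  calc ‖Ξ a b - Ξ s t‖ = ‖Ξ a s - Ξ b t + delta Ξ a s t - delta Ξ a b t‖ := by
        congr 1; simp only [delta]; abel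
    _ ≤ ‖Ξ a s‖ + ‖Ξ b t‖ + ‖delta Ξ a s t‖ + ‖delta Ξ a b t‖ :=
        (norm_sub_le _ _).trans (add_le_add_left ((norm_add_le _ _).trans
          (add_le_add_left (norm_sub_le _ _) _)) _)
    _ ≤ L * h ^ γ + L * h ^ γ + K * (t - a) ^ θ + K * (t - a) ^ θ := by
        gcongr
        exacts [hδ a s t ha has hst htT, hδ a b t ha hab hbt htT]
    _ = 2 * L * h ^ γ + 2 * K * (t - a) ^ θ := by ring

theorem norm_gridSum_floor_sub_le (hθ : 1 < θ) (hγ : 0 ≤ γ) (hK : 0 ≤ K) (hL : 0 ≤ L)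
    (hh : 0 < h) (hΞ : GermBound T L γ Ξ) (hδ : DeltaBound T K θ Ξ)
    {s t : ℝ} (hs : 0 ≤ s) (hst : s ≤ t) (htT : t ≤ T) :
    ‖gridSum Ξ h ⌊t / h⌋₊ - gridSum Ξ h ⌊s / h⌋₊ - Ξ s t‖ ≤
      (sewingConst θ + 2) * K * (t - s + h) ^ θ + 2 * L * h ^ γ := by
  obtain ⟨m, hm⟩ :=
    Nat.exists_eq_add_of_le (Nat.floor_le_floor (div_le_div_of_nonneg_right hst hh.le))
  set k := ⌊s / h⌋₊
  have has := Nat.floor_div_mul_le hs hh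
  have hsa := Nat.lt_floor_div_mul_add s hh
  have hbt := Nat.floor_div_mul_le (hs.trans hst) hh
  have htb := Nat.lt_floor_div_mul_add t hh
  rw [hm] at hbt htb ⊢
  have hgrid := norm_gridSum_add_sub_le hθ hK hh.le hδ (hbt.trans htT)
  have hnear := norm_sub_le_of_near (h := h) hL hγ hΞ hδ (by positivity) has (by gcongr; omega)
    hst hbt htT (by linarith) (by linarith)
  have hmh : (m : ℝ) * h ≤ t - s + h := by push_cast at hbt; linarith
  have hc := sewingConst_pos hθ
  calc _ = ‖(gridSum Ξ h (k + m) - gridSum Ξ h k - Ξ (k * h) (((k + m : ℕ) : ℝ) * h)) +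
        (Ξ (k * h) (((k + m : ℕ) : ℝ) * h) - Ξ s t)‖ := by rw [sub_add_sub_cancel]
    _ ≤ sewingConst θ * K * (m * h) ^ θ + (2 * L * h ^ γ + 2 * K * (t - k * h) ^ θ) :=
        (norm_add_le _ _).trans (add_le_add hgrid hnear)
    _ ≤ sewingConst θ * K * (t - s + h) ^ θ + (2 * L * h ^ γ + 2 * K * (t - s + h) ^ θ) := by
        gcongr <;> linarith
    _ = _ := by ring

noncomputable def dyadicSum (Ξ : ℝ → ℝ → E) (T : ℝ) (n : ℕ) (t : ℝ) : E :=
  gridSum Ξ (T / 2 ^ n) ⌊t / (T / 2 ^ n)⌋₊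

theorem dist_dyadicSum_succ_le (hT : 0 < T) (hθ : 1 < θ) (hK : 0 ≤ K) (hL : 0 ≤ L)
    (hΞ : GermBound T L γ Ξ) (hδ : DeltaBound T K θ Ξ)
    {t : ℝ} (ht : 0 ≤ t) (htT : t ≤ T) (n : ℕ) :
    dist (dyadicSum Ξ T n t) (dyadicSum Ξ T (n + 1) t) ≤
      L * (T / 2 ^ (n + 1)) ^ γ + sewingConst θ * K * (2 ^ n * (T / 2 ^ n) ^ θ) := by
  set h := T / 2 ^ n with hdef
  have hh : 0 < h := by positivity
  have hhalf : T / 2 ^ (n + 1) = h / 2 := by rw [pow_succ, ← div_div]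
  have hdouble : t / (h / 2) = 2 * (t / h) := by field_simp
  have hk'T := Nat.floor_div_mul_le ht (half_pos hh)
  have hk : (⌊t / h⌋₊ : ℝ) ≤ 2 ^ n := by
    calc (⌊t / h⌋₊ : ℝ) ≤ T / h := (Nat.floor_le (by positivity)).trans (by gcongr)
      _ = 2 ^ n := by rw [hdef]; field_simp
  rw [hdouble] at hk'T
  rw [dist_comm, dist_eq_norm, dyadicSum, dyadicSum, hhalf, hdouble]
  refine (norm_gridSum_half_sub_le hθ hK hL hh.le hΞ hδ
    (Nat.two_mul_floor_le_floor_two_mul (by positivity)) (Nat.floor_two_mul_le (by positivity))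
    (hk'T.trans htT)).trans ?_
  have hc := sewingConst_pos hθ
  have := mul_le_mul_of_nonneg_right hk (by positivity : 0 ≤ sewingConst θ * K * h ^ θ)
  linarith

theorem exists_sewing [CompleteSpace E] (hT : 0 < T) (hθ : 1 < θ) (hγ : 0 < γ) (hK : 0 ≤ K)
    (hL : 0 ≤ L) (hΞ : GermBound T L γ Ξ) (hδ : DeltaBound T K θ Ξ) :
    ∃ I : ℝ → E, I 0 = 0 ∧
      GermBound T ((sewingConst θ + 2) * K) θ fun s t => I t - I s - Ξ s t := by
  have hsum : Summable fun n : ℕ =>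
      L * (T / 2 ^ (n + 1)) ^ γ + sewingConst θ * K * (2 ^ n * (T / 2 ^ n) ^ θ) :=
    (((summable_nat_add_iff 1).2 (summable_div_two_pow_rpow hT.le hγ)).mul_left L).add
      ((summable_two_pow_mul_div_two_pow_rpow hT.le hθ).mul_left _)
  have hlim : ∀ t, 0 ≤ t → t ≤ T → Tendsto (fun n => dyadicSum Ξ T n t) atTop
      (𝓝 (limUnder atTop fun n => dyadicSum Ξ T n t)) := fun t ht htT =>
    (cauchySeq_of_dist_le_of_summable _ (dist_dyadicSum_succ_le hT hθ hK hL hΞ hδ ht htT)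
      hsum).tendsto_limUnder
  refine ⟨fun t => limUnder atTop fun n => dyadicSum Ξ T n t, ?_, fun s t hs hst htT => ?_⟩
  · simp only [dyadicSum, zero_div, Nat.floor_zero, gridSum, range_zero, sum_empty]
    exact tendsto_const_nhds.limUnder_eq
  have hmesh : Tendsto (fun n : ℕ => T / 2 ^ n) atTop (𝓝 0) :=
    tendsto_const_nhds.div_atTop (tendsto_pow_atTop_atTop_of_one_lt one_lt_two)
  have hbound : Tendsto (fun n : ℕ => (sewingConst θ + 2) * K * (t - s + T / 2 ^ n) ^ θ +
      2 * L * (T / 2 ^ n) ^ γ) atTop (𝓝 ((sewingConst θ + 2) * K * (t - s) ^ θ)) := by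
    simpa using
      (((tendsto_const_nhds.add hmesh).rpow_const (Or.inr (by linarith))).const_mul _).add
        ((hmesh.rpow_const_nhds_zero hγ).const_mul (2 * L))
  exact le_of_tendsto_of_tendsto'
    (((hlim t (hs.trans hst) htT).sub (hlim s hs (hst.trans htT))).sub_const _).norm hbound
    fun n => norm_gridSum_floor_sub_le hθ hγ.le hK hL (by positivity) hΞ hδ hs hst htT

end Grid

section Holder

variable {E : Type*} [SeminormedAddCommGroup E] {I : ℝ → E} {Ξ : ℝ → ℝ → E} {T θ γ A B : ℝ}

theorem norm_sub_sub_le_of_le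
    (hI : GermBound T A θ fun s t => I t - I s - Ξ s t)
    (hswap : GermBound T B θ fun s t => Ξ s t + Ξ t s)
    {s t : ℝ} (hs : s ∈ Icc 0 T) (ht : t ∈ Icc 0 T) :
    ‖I t - I s - Ξ s t‖ ≤ (A + B) * |t - s| ^ θ := by
  obtain hst | hts := le_total s t
  · rw [abs_of_nonneg (sub_nonneg.2 hst), add_mul]
    exact (hI s t hs.1 hst ht.2).trans
      (le_add_of_nonneg_right ((norm_nonneg _).trans (hswap s t hs.1 hst ht.2)))
  · rw [abs_sub_comm, abs_of_nonneg (sub_nonneg.2 hts), add_mul]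
    calc _ = ‖-(I s - I t - Ξ t s) - (Ξ t s + Ξ s t)‖ := by congr 1; abel
      _ ≤ _ := (norm_sub_le _ _).trans (add_le_add (by rw [norm_neg]; exact hI t s ht.1 hts hs.2)
        (hswap t s ht.1 hts hs.2))

theorem norm_sub_le_of_norm_sub_sub_le (hγ : 0 ≤ γ) (hγθ : γ ≤ θ) (hA : 0 ≤ A)
    (hI : ∀ s ∈ Icc 0 T, ∀ t ∈ Icc 0 T, ‖I t - I s - Ξ s t‖ ≤ A * |t - s| ^ θ)
    (hΞ : ∀ s ∈ Icc 0 T, ∀ t ∈ Icc 0 T, ‖Ξ s t‖ ≤ B * |t - s| ^ γ)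
    {s t : ℝ} (hs : s ∈ Icc 0 T) (ht : t ∈ Icc 0 T) :
    ‖I t - I s‖ ≤ (A * T ^ (θ - γ) + B) * |t - s| ^ γ := by
  have hts : |t - s| ≤ T := abs_sub_le_of_nonneg_of_le ht.1 ht.2 hs.1 hs.2
  calc ‖I t - I s‖ = ‖(I t - I s - Ξ s t) + Ξ s t‖ := by rw [sub_add_cancel]
    _ ≤ A * (|t - s| ^ (θ - γ) * |t - s| ^ γ) + B * |t - s| ^ γ := by
      rw [← Real.rpow_add_of_nonneg (abs_nonneg _) (by linarith) hγ, sub_add_cancel θ γ]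
      exact (norm_add_le _ _).trans (add_le_add (hI s hs t ht) (hΞ s hs t ht))
    _ ≤ A * (T ^ (θ - γ) * |t - s| ^ γ) + B * |t - s| ^ γ := by
      gcongr
    _ = _ := by ring

end Holder

end Sewing

def HolderOnIcc {Z : Type*} [SeminormedAddGroup Z] (T K α : ℝ) (f : ℝ → Z) : Prop :=
  ∀ s ∈ Icc (0 : ℝ) T, ∀ t ∈ Icc (0 : ℝ) T, ‖f t - f s‖ ≤ K * |t - s| ^ α

lemma HolderOnIcc.nonneg {Z : Type*} [SeminormedAddGroup Z] {f : ℝ → Z} {T K α : ℝ} (hT : 0 < T)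
    (hf : HolderOnIcc T K α f) : 0 ≤ K := by
  have h := (norm_nonneg _).trans (hf 0 ⟨le_rfl, hT.le⟩ T ⟨hT.le, le_rfl⟩)
  exact nonneg_of_mul_nonneg_left h (by rw [sub_zero, abs_of_pos hT]; positivity)

section Young

variable {X Y : Type*} [NormedAddCommGroup X] [NormedSpace ℝ X] [NormedAddCommGroup Y]
  [NormedSpace ℝ Y] {f : ℝ → X} {g : ℝ → X →L[ℝ] Y} {T α β Kf Kg : ℝ}

def youngGerm (f : ℝ → X) (g : ℝ → X →L[ℝ] Y) (s t : ℝ) : Y := g s (f t - f s)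

lemma delta_youngGerm (s u t : ℝ) :
    Sewing.delta (youngGerm f g) s u t = (g s - g u) (f t - f u) := by
  simp only [Sewing.delta, youngGerm, sub_apply, map_sub]
  abel

lemma youngGerm_add_youngGerm (s t : ℝ) :
    youngGerm f g s t + youngGerm f g t s = (g s - g t) (f t - f s) := by
  rw [youngGerm, youngGerm, sub_apply, ← neg_sub (f t), map_neg, ← sub_eq_add_neg]

lemma norm_youngGerm_le (hf : HolderOnIcc T Kf α f) (hg : ∀ t ∈ Icc 0 T, ‖g t‖ ≤ Kg)
    {s t : ℝ} (hs : s ∈ Icc 0 T) (ht : t ∈ Icc 0 T) :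
    ‖youngGerm f g s t‖ ≤ Kg * Kf * |t - s| ^ α :=
  calc ‖youngGerm f g s t‖ ≤ ‖g s‖ * ‖f t - f s‖ := (g s).le_opNorm _
    _ ≤ Kg * (Kf * |t - s| ^ α) :=
      mul_le_mul (hg s hs) (hf s hs t ht) (norm_nonneg _) ((norm_nonneg _).trans (hg s hs))
    _ = Kg * Kf * |t - s| ^ α := (mul_assoc _ _ _).symm

lemma norm_sub_apply_sub_le (hf : HolderOnIcc T Kf α f) (hg : HolderOnIcc T Kg β g)
    {a b c d : ℝ} (ha : a ∈ Icc 0 T) (hb : b ∈ Icc 0 T) (hc : c ∈ Icc 0 T) (hd : d ∈ Icc 0 T) :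
    ‖(g a - g b) (f c - f d)‖ ≤ Kg * Kf * (|a - b| ^ β * |c - d| ^ α) :=
  calc ‖(g a - g b) (f c - f d)‖ ≤ ‖g a - g b‖ * ‖f c - f d‖ := (g a - g b).le_opNorm _
    _ ≤ Kg * |a - b| ^ β * (Kf * |c - d| ^ α) :=
      mul_le_mul (hg b hb a ha) (hf d hd c hc) (norm_nonneg _)
        ((norm_nonneg _).trans (hg b hb a ha))
    _ = Kg * Kf * (|a - b| ^ β * |c - d| ^ α) := by ring

lemma germBound_youngGerm (hf : HolderOnIcc T Kf α f) (hg : ∀ t ∈ Icc 0 T, ‖g t‖ ≤ Kg) :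
    Sewing.GermBound T (Kg * Kf) α (youngGerm f g) := fun s t hs hst htT => by
  simpa only [abs_of_nonneg (sub_nonneg.2 hst)] using
    norm_youngGerm_le hf hg ⟨hs, hst.trans htT⟩ ⟨hs.trans hst, htT⟩

lemma deltaBound_youngGerm (hf : HolderOnIcc T Kf α f) (hg : HolderOnIcc T Kg β g)
    (hKf : 0 ≤ Kf) (hKg : 0 ≤ Kg) (hα : 0 ≤ α) (hβ : 0 ≤ β) :
    Sewing.DeltaBound T (Kg * Kf) (α + β) (youngGerm f g) := fun s u t hs hsu hut htT => by
  have mem : ∀ x, s ≤ x → x ≤ t → x ∈ Icc 0 T := fun x hsx hxt => ⟨hs.trans hsx, hxt.trans htT⟩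
  rw [delta_youngGerm]
  refine (norm_sub_apply_sub_le hf hg (mem s le_rfl (hsu.trans hut)) (mem u hsu hut)
    (mem t (hsu.trans hut) le_rfl) (mem u hsu hut)).trans ?_
  rw [Real.rpow_add_of_nonneg (by linarith) hα hβ, mul_comm ((t - s) ^ α)]
  gcongr
  · exact Real.rpow_nonneg (by linarith) _
  all_goals exact abs_le.2 ⟨by linarith, by linarith⟩

lemma germBound_youngGerm_add_swap (hf : HolderOnIcc T Kf α f) (hg : HolderOnIcc T Kg β g)
    (hα : 0 ≤ α) (hβ : 0 ≤ β) :
    Sewing.GermBound T (Kg * Kf) (α + β) fun s t => youngGerm f g s t + youngGerm f g t s :=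
  fun s t hs hst htT => by
    have h := norm_sub_apply_sub_le hf hg ⟨hs, hst.trans htT⟩ ⟨hs.trans hst, htT⟩
      ⟨hs.trans hst, htT⟩ ⟨hs, hst.trans htT⟩
    rwa [abs_sub_comm s t, abs_of_nonneg (sub_nonneg.2 hst),
      ← Real.rpow_add_of_nonneg (sub_nonneg.2 hst) hβ hα, add_comm β α,
      ← youngGerm_add_youngGerm] at h

theorem exists_youngIntegral [CompleteSpace Y] (hT : 0 < T) (hα : 0 < α) (hβ : 0 ≤ β)
    (hαβ : 1 < α + β) (hf : HolderOnIcc T Kf α f) (hgb : ∀ t ∈ Icc 0 T, ‖g t‖ ≤ Kg)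
    (hg : HolderOnIcc T Kg β g) :
    ∃ I : ℝ → Y, I 0 = 0 ∧
      (∀ s ∈ Icc 0 T, ∀ t ∈ Icc 0 T, ‖I t - I s - youngGerm f g s t‖ ≤
        (sewingConst (α + β) + 3) * (Kg * Kf) * |t - s| ^ (α + β)) ∧
      (∀ s ∈ Icc 0 T, ∀ t ∈ Icc 0 T, ‖I t - I s‖ ≤
        ((sewingConst (α + β) + 3) * T ^ β + 1) * (Kg * Kf) * |t - s| ^ α) := by
  have hKg : 0 ≤ Kg := (norm_nonneg _).trans (hgb 0 ⟨le_rfl, hT.le⟩)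
  have hK : 0 ≤ Kg * Kf := mul_nonneg hKg (hf.nonneg hT)
  obtain ⟨I, hI0, hI⟩ := Sewing.exists_sewing hT hαβ hα hK hK (germBound_youngGerm hf hgb)
    (deltaBound_youngGerm hf hg (hf.nonneg hT) hKg hα.le hβ)
  have hsew : ∀ s ∈ Icc 0 T, ∀ t ∈ Icc 0 T, ‖I t - I s - youngGerm f g s t‖ ≤
      (sewingConst (α + β) + 3) * (Kg * Kf) * |t - s| ^ (α + β) := fun s hs t ht => by
    have := Sewing.norm_sub_sub_le_of_le hI (germBound_youngGerm_add_swap hf hg hα.le hβ) hs ht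
    rwa [← add_one_mul, add_assoc, two_add_one_eq_three] at this
  refine ⟨I, hI0, hsew, fun s hs t ht => ?_⟩
  have hc := sewingConst_pos hαβ
  have := Sewing.norm_sub_le_of_norm_sub_sub_le hα.le (by linarith) (by positivity) hsew
    (fun s hs t ht => norm_youngGerm_le hf hgb hs ht) hs ht
  rwa [add_sub_cancel_left, mul_right_comm, ← add_one_mul] at this

end Young

/-- Young integration: for `f ∈ C^α([0,T];X)` and `g ∈ C^β([0,T];X*)` with `α+β>1`,
the Young integral `t ↦ ∫₀ᵗ ⟨g_r, df_r⟩` is well-defined (characterized by the sewing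
local approximation property) and is `α`-Hölder with norm controlled by
`C ‖g‖_{C^β} ‖f‖_{C^α}`. -/
theorem stmt_0 {X : Type*} [NormedAddCommGroup X] [NormedSpace ℝ X]
    (T α β : ℝ) (hT : 0 < T) (hα : α ∈ Set.Ioo (0:ℝ) 1) (hβ : β ∈ Set.Ioo (0:ℝ) 1)
    (hαβ : 1 < α + β) :
    ∃ C : ℝ, 0 < C ∧
      ∀ (f : ℝ → X) (g : ℝ → (X →L[ℝ] ℝ)) (Kf Kg : ℝ),
        (∀ s ∈ Icc (0:ℝ) T, ∀ t ∈ Icc (0:ℝ) T, ‖f t - f s‖ ≤ Kf * |t - s| ^ α) →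
        (∀ t ∈ Icc (0:ℝ) T, ‖g t‖ ≤ Kg) →
        (∀ s ∈ Icc (0:ℝ) T, ∀ t ∈ Icc (0:ℝ) T, ‖g t - g s‖ ≤ Kg * |t - s| ^ β) →
        ∃ I : ℝ → ℝ, I 0 = 0 ∧
          (∀ s ∈ Icc (0:ℝ) T, ∀ t ∈ Icc (0:ℝ) T,
            |I t - I s - g s (f t - f s)| ≤ C * Kg * Kf * |t - s| ^ (α + β)) ∧
          (∀ t ∈ Icc (0:ℝ) T, |I t| ≤ C * Kg * Kf) ∧
          (∀ s ∈ Icc (0:ℝ) T, ∀ t ∈ Icc (0:ℝ) T,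
            |I t - I s| ≤ C * Kg * Kf * |t - s| ^ α) := by
  have hc := sewingConst_pos hαβ
  obtain ⟨C, hC, hsewC, hholC⟩ : ∃ C : ℝ, 0 < C ∧ sewingConst (α + β) + 3 ≤ C ∧
      ((sewingConst (α + β) + 3) * T ^ β + 1) * (1 + T ^ α) ≤ C := by
    have hTα : 0 ≤ T ^ α := by positivity
    have hTβ : 0 ≤ T ^ β := by positivity
    have := mul_nonneg (mul_nonneg hc.le hTβ) hTα
    exact ⟨(sewingConst (α + β) + 3) * (1 + T ^ β) * (1 + T ^ α), by positivity,
      by nlinarith [mul_nonneg hTα hTβ], by nlinarith [mul_nonneg hTα hTβ]⟩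
  refine ⟨C, hC, fun f g Kf Kg (hf : HolderOnIcc T Kf α f) hgb (hg : HolderOnIcc T Kg β g) => ?_⟩
  obtain ⟨I, hI0, hsew, hhol⟩ := exists_youngIntegral hT hα.1 hβ.1.le hαβ hf hgb hg
  have hK : 0 ≤ Kg * Kf := mul_nonneg ((norm_nonneg _).trans (hgb 0 ⟨le_rfl, hT.le⟩)) (hf.nonneg hT)
  refine ⟨I, hI0, fun s hs t ht => (hsew s hs t ht).trans ?_, fun t ht => ?_,
    fun s hs t ht => (hhol s hs t ht).trans ?_⟩
  · rw [mul_assoc C]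
    gcongr
  · have h := hhol 0 ⟨le_rfl, hT.le⟩ t ht
    rw [hI0, sub_zero, sub_zero, abs_of_nonneg ht.1] at h
    have hsup : ((sewingConst (α + β) + 3) * T ^ β + 1) * T ^ α ≤ C :=
      hholC.trans' (by gcongr; exact le_add_of_nonneg_left zero_le_one)
    calc |I t| ≤ ((sewingConst (α + β) + 3) * T ^ β + 1) * (Kg * Kf) * T ^ α :=
          h.trans (by gcongr; exacts [ht.1, hα.1.le, ht.2])
      _ ≤ C * (Kg * Kf) := by rw [mul_right_comm]; gcongr
      _ = C * Kg * Kf := (mul_assoc _ _ _).symm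
  · rw [mul_assoc C]
    gcongr
    exact hholC.trans'
      (le_mul_of_one_le_right (by positivity) (le_add_of_nonneg_right (by positivity)))
end

section
/- For w ∈ ℝ³ and H a symmetric trace-free 3×3 real matrix, define e(w,H) = (3/2) λ_max(w ⊗ w − H), where λ_max denotes the largest eigenvalue of a symmetric matrix. Then (1/2)|w|² ≤ e(w,H) and ‖H‖_op ≤ (4/3) e(w,H), where ‖H‖_op is the operator norm of H. -/
/-!
On the standard basis vectors the Rayleigh quotient of `w ⊗ w - H` is `w i ^ 2 - H i i`, so
summing gives `|w|² = |w|² - tr H ≤ 3 λ`. Since `(w ⬝ᵥ v)² ≥ 0`, the Rayleigh quotient of `H`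
is at least `-λ`, hence so is every eigenvalue of `H`; as the three eigenvalues sum to
`tr H = 0`, each is at most `2 λ`. The operator norm of a symmetric matrix is the largest
modulus of its eigenvalues, so `‖H‖ ≤ 2 λ = (4/3) e`.
-/

open Matrix

namespace Matrix

variable {n : Type*} [Fintype n]

theorem dotProduct_vecMulVec_self_mulVec {R : Type*} [CommRing R] (w v : n → R) :
    v ⬝ᵥ (vecMulVec w w *ᵥ v) = (w ⬝ᵥ v) ^ 2 := by
  rw [vecMulVec_mulVec, op_smul_eq_smul, dotProduct_smul, smul_eq_mul, dotProduct_comm, sq]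

theorem trace_le_card_mul_of_dotProduct_mulVec_le [DecidableEq n] {A : Matrix n n ℝ} {c : ℝ}
    (h : ∀ v : n → ℝ, v ⬝ᵥ v = 1 → v ⬝ᵥ (A *ᵥ v) ≤ c) :
    A.trace ≤ Fintype.card n * c := by
  have hdiag : ∀ i, A i i ≤ c := fun i ↦ by
    simpa using h (Pi.single i 1) (by simp)
  simpa [trace] using Finset.sum_le_card_nsmul Finset.univ (fun i ↦ A i i) c fun i _ ↦ hdiag i

variable {𝕜 : Type*} [RCLike 𝕜] {A : Matrix n n 𝕜}

namespace IsHermitian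

theorem le_eigenvalues_of_le_re_dotProduct_mulVec [DecidableEq n] (hA : A.IsHermitian) {c : ℝ}
    (h : ∀ v : n → 𝕜, star v ⬝ᵥ v = 1 → c ≤ RCLike.re (star v ⬝ᵥ (A *ᵥ v))) (i : n) :
    c ≤ hA.eigenvalues i := by
  rw [hA.eigenvalues_eq]
  refine h _ ?_
  rw [dotProduct_comm, ← EuclideanSpace.inner_eq_star_dotProduct, inner_self_eq_norm_sq_to_K,
    hA.eigenvectorBasis.orthonormal.1 i]
  simp

theorem eigenvalues_le_of_trace_eq_zero [DecidableEq n] (hA : A.IsHermitian) (htr : A.trace = 0)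
    {c : ℝ} (h : ∀ j, -c ≤ hA.eigenvalues j) (i : n) :
    hA.eigenvalues i ≤ (Fintype.card n - 1) * c := by
  rw [hA.trace_eq_sum_eigenvalues, ← RCLike.ofReal_sum, RCLike.ofReal_eq_zero] at htr
  have hrest : -∑ j ∈ Finset.univ.erase i, hA.eigenvalues j ≤ (Finset.univ.erase i).card * c := by
    simpa [Finset.sum_neg_distrib, mul_comm] using
      Finset.sum_le_card_nsmul (Finset.univ.erase i) (fun j ↦ -hA.eigenvalues j) c
        fun j _ ↦ neg_le.mp (h j)
  rw [Finset.card_erase_of_mem (Finset.mem_univ i), Finset.card_univ,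
    Nat.cast_sub (Fintype.card_pos_iff.mpr ⟨i⟩), Nat.cast_one] at hrest
  linarith [Finset.add_sum_erase Finset.univ hA.eigenvalues (Finset.mem_univ i)]

open scoped Matrix.Norms.L2Operator in
theorem l2_opNorm_eq_norm_eigenvalues [DecidableEq n] (hA : A.IsHermitian) :
    ‖A‖ = ‖hA.eigenvalues‖ := by
  conv_lhs => rw [hA.spectral_theorem, Unitary.conjStarAlgAut_apply]
  rw [← Unitary.coe_star, CStarRing.norm_mul_coe_unitary, CStarRing.norm_coe_unitary_mul,
    l2_opNorm_diagonal]
  simp only [Pi.norm_def, Function.comp_apply]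
  congr! 3 with i
  exact Subtype.ext (RCLike.norm_ofReal _)

end IsHermitian

end Matrix

/-- For `w ∈ ℝ³` and `H` symmetric trace-free, with
`e(w,H) = (3/2) λ_max(w⊗w − H)` (λ_max characterized as the greatest Rayleigh quotient),
one has `(1/2)|w|² ≤ e(w,H)` and `‖H‖_op ≤ (4/3) e(w,H)`. -/
theorem stmt_2 (w : Fin 3 → ℝ) (H : Matrix (Fin 3) (Fin 3) ℝ)
    (hH : H.IsSymm) (htr : H.trace = 0) (lam e : ℝ)
    (hlam : IsGreatest
      {r : ℝ | ∃ v : Fin 3 → ℝ, v ⬝ᵥ v = 1 ∧ v ⬝ᵥ ((vecMulVec w w - H) *ᵥ v) = r} lam)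
    (he : e = (3 / 2) * lam) :
    (1 / 2) * (w ⬝ᵥ w) ≤ e ∧
      ‖Matrix.toEuclideanCLM (𝕜 := ℝ) H‖ ≤ (4 / 3) * e := by
  have hray : ∀ v : Fin 3 → ℝ, v ⬝ᵥ v = 1 → v ⬝ᵥ ((vecMulVec w w - H) *ᵥ v) ≤ lam :=
    fun v hv ↦ hlam.2 ⟨v, hv, rfl⟩
  have htrace := trace_le_card_mul_of_dotProduct_mulVec_le hray
  rw [trace_sub, trace_vecMulVec, htr, sub_zero, Fintype.card_fin, Nat.cast_ofNat] at htrace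
  have hHerm : H.IsHermitian := isHermitian_iff_isSymm.mpr hH
  have hlow : ∀ i, -lam ≤ hHerm.eigenvalues i := hHerm.le_eigenvalues_of_le_re_dotProduct_mulVec
    fun v hv ↦ by
      have := hray v hv
      rw [sub_mulVec, dotProduct_sub, dotProduct_vecMulVec_self_mulVec] at this
      simp only [star_trivial, RCLike.re_to_real]
      linarith [sq_nonneg (w ⬝ᵥ v)]
  have hupp : ∀ i, hHerm.eigenvalues i ≤ 2 * lam := fun i ↦ by
    simpa [Fintype.card_fin, show (3 : ℝ) - 1 = 2 by norm_num] using
      hHerm.eigenvalues_le_of_trace_eq_zero htr hlow i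
  have hnorm : ‖hHerm.eigenvalues‖ ≤ 2 * lam :=
    (pi_norm_le_iff_of_nonneg (by linarith [hlow 0, hupp 0])).mpr fun i ↦
      abs_le.mpr ⟨by linarith [hlow i, hupp i], hupp i⟩
  refine ⟨by rw [he]; linarith, ?_⟩
  open scoped Matrix.Norms.L2Operator in
  rw [he, l2_opNorm_toEuclideanCLM, hHerm.l2_opNorm_eq_norm_eigenvalues]
  linarith
end

section
/- Let H be a real Hilbert space and (v_k)_{k≥0} a sequence in H such that: (i) the sequence of real numbers ‖v_k‖² converges; (ii) for all integers 0 ≤ m < k, |⟨v_k − v_{k−1}, v_m⟩| ≤ 2^{−k}. Then (v_k) is a Cauchy sequence in H. -/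
open Filter Topology RealInnerProductSpace

/-! Expanding `v_n = (v_n - v_m) + v_m` gives
`‖v_n - v_m‖² = ‖v_n‖² - ‖v_m‖² - 2⟪v_n - v_m, v_m⟫`. The first difference is small because
`‖v_k‖²` converges, and telescoping `⟪v_n - v_m, v_m⟫ = Σ_{m<k≤n} ⟪v_k - v_{k-1}, v_m⟫` bounds the
inner product by `Σ_{k>m} 2^{-k} = 2^{-m}`. -/

theorem abs_sub_le_two_zpow_sub_two_zpow {f : ℕ → ℝ} {m : ℕ}
    (hf : ∀ k, m < k → |f k - f (k - 1)| ≤ (2 : ℝ) ^ (-(k : ℤ))) {n : ℕ} (hmn : m ≤ n) :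
    |f n - f m| ≤ (2 : ℝ) ^ (-(m : ℤ)) - (2 : ℝ) ^ (-(n : ℤ)) := by
  induction n, hmn using Nat.le_induction with
  | base => simp
  | succ n hmn ih =>
    have hstep := hf (n + 1) (Nat.lt_succ_of_le hmn)
    rw [Nat.add_sub_cancel] at hstep
    have hhalf : (2 : ℝ) ^ (-((n + 1 : ℕ) : ℤ)) = (2 : ℝ) ^ (-(n : ℤ)) / 2 := by
      rw [Nat.cast_succ, neg_add, zpow_add₀ two_ne_zero, zpow_neg_one, div_eq_mul_inv]
    calc |f (n + 1) - f m| ≤ |f (n + 1) - f n| + |f n - f m| := abs_sub_le _ _ _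
      _ ≤ (2 : ℝ) ^ (-((n + 1 : ℕ) : ℤ)) + ((2 : ℝ) ^ (-(m : ℤ)) - (2 : ℝ) ^ (-(n : ℤ))) :=
        add_le_add hstep ih
      _ = (2 : ℝ) ^ (-(m : ℤ)) - (2 : ℝ) ^ (-((n + 1 : ℕ) : ℤ)) := by rw [hhalf]; ring

theorem norm_sub_sq_eq_norm_sq_sub_norm_sq_sub_inner {H : Type*} [NormedAddCommGroup H]
    [InnerProductSpace ℝ H] (x y : H) :
    ‖x - y‖ ^ 2 = ‖x‖ ^ 2 - ‖y‖ ^ 2 - 2 * ⟪x - y, y⟫ := by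
  have h := norm_add_sq_real (x - y) y
  rw [sub_add_cancel] at h
  linarith

theorem norm_sub_sq_le_of_abs_inner_sub_le {H : Type*} [NormedAddCommGroup H]
    [InnerProductSpace ℝ H] {v : ℕ → H} {m : ℕ}
    (hsmall : ∀ k, m < k → |⟪v k - v (k - 1), v m⟫| ≤ (2 : ℝ) ^ (-(k : ℤ)))
    {n : ℕ} (hmn : m ≤ n) :
    ‖v n - v m‖ ^ 2 ≤ ‖v n‖ ^ 2 - ‖v m‖ ^ 2 + 2 * (2 : ℝ) ^ (-(m : ℤ)) := by
  have hinner : |⟪v n - v m, v m⟫| ≤ (2 : ℝ) ^ (-(m : ℤ)) - (2 : ℝ) ^ (-(n : ℤ)) := by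
    simp only [inner_sub_left] at hsmall ⊢
    exact abs_sub_le_two_zpow_sub_two_zpow (f := fun k => ⟪v k, v m⟫) hsmall hmn
  have hpos : 0 < (2 : ℝ) ^ (-(n : ℤ)) := by positivity
  rw [norm_sub_sq_eq_norm_sq_sub_norm_sq_sub_inner]
  linarith [neg_abs_le ⟪v n - v m, v m⟫]

/-- If `‖v_k‖²` converges and `|⟨v_k − v_{k−1}, v_m⟩| ≤ 2^{−k}` for all `m < k`, then
`(v_k)` is Cauchy in the Hilbert space. -/
theorem stmt_8 {H : Type*} [NormedAddCommGroup H] [InnerProductSpace ℝ H]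
    (v : ℕ → H) (l : ℝ)
    (hconv : Tendsto (fun k => ‖v k‖ ^ 2) atTop (nhds l))
    (hsmall : ∀ m k : ℕ, m < k → |⟪v k - v (k - 1), v m⟫| ≤ (2 : ℝ) ^ (-(k : ℤ))) :
    CauchySeq v := by
  rw [Metric.cauchySeq_iff']
  intro ε hε
  have hnorm : ∀ᶠ N in atTop, ∀ n ≥ N, ‖v n‖ ^ 2 - ‖v N‖ ^ 2 < ε ^ 2 / 2 := by
    obtain ⟨N₀, hN₀⟩ := Metric.cauchySeq_iff.mp hconv.cauchySeq (ε ^ 2 / 2) (by positivity)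
    filter_upwards [eventually_ge_atTop N₀] with N hN n hn
    exact (le_abs_self _).trans_lt (hN₀ n (hN.trans hn) N hN)
  have hgeom : ∀ᶠ N : ℕ in atTop, 2 * (2 : ℝ) ^ (-(N : ℤ)) < ε ^ 2 / 2 := by
    have h : Tendsto (fun N : ℕ => 2 * (2 : ℝ) ^ (-(N : ℤ))) atTop (𝓝 0) := by
      simpa [zpow_neg, zpow_natCast, ← inv_pow] using
        (tendsto_pow_atTop_nhds_zero_of_lt_one (r := (2 : ℝ)⁻¹) (by norm_num)
          (by norm_num)).const_mul 2
    exact h.eventually (gt_mem_nhds (by positivity))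
  obtain ⟨N, hN, hN'⟩ := (hnorm.and hgeom).exists
  refine ⟨N, fun n hn => ?_⟩
  rw [dist_eq_norm, ← pow_lt_pow_iff_left₀ (norm_nonneg _) hε.le two_ne_zero]
  linarith [norm_sub_sq_le_of_abs_inner_sub_le (hsmall N) hn, hN n hn]
end
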